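/- For every concave g : ℝ^k → ℝ and every fixed b ∈ (ℝ≥0)^k, the map ξ ↦ G(g, b, ξ) is concave on the convex set of families ξ = (ξ_i)_i with ξ_i : V_{-i} → ℝ≥0: for all such families ξ, ξ' and θ ∈ [0,1], G(g, b, θ·ξ + (1−θ)·ξ') ≥ θ·G(g, b, ξ) + (1−θ)·G(g, b, ξ'). -/

import Mathlib

open Finset

namespace SinglePeriod

/-- A single-period setting with `k` buyers: finite nonnegative value spaces and
full-support probability mass functions, independent across buyers. -/
structure Setting (k : ℕ) where
  V : Fin k → Finset ℝ
  V_nonempty : ∀ i, (V i).Nonempty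
  V_nonneg : ∀ i, ∀ s ∈ V i, (0 : ℝ) ≤ s
  f : Fin k → ℝ → ℝ
  f_pos : ∀ i, ∀ s ∈ V i, 0 < f i s
  f_sum : ∀ i, ∑ s ∈ V i, f i s = 1

variable {k : ℕ}

/-- The finite set of all (valid) value profiles. -/
noncomputable def profiles (S : Setting k) : Finset (Fin k → ℝ) :=
  Fintype.piFinset fun i => S.V i

/-- Probability of a value profile (independent coordinates). -/
noncomputable def prob (S : Setting k) (v : Fin k → ℝ) : ℝ := ∏ i, S.f i (v i)

/-- The largest element of `V i` strictly below `s`, or `0` if none exists. -/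
noncomputable def predV (S : Setting k) (i : Fin k) (s : ℝ) : ℝ :=
  WithBot.unbotD 0 (((S.V i).filter fun s' => s' < s).max)

/-- An allocation rule. -/
abbrev Alloc (k : ℕ) := (Fin k → ℝ) → Fin k → ℝ

/-- A family `ξ = (ξ_i)_i` of per-buyer expected utilities; `ξ i v` is required to
depend only on `v_{-i}` (see `ValidXi`). -/
abbrev Util (k : ℕ) := Fin k → (Fin k → ℝ) → ℝ

/-- `ξ` is a valid family: nonnegative and `ξ i` depends only on the coordinates
other than `i`. -/
def ValidXi (S : Setting k) (ξ : Util k) : Prop :=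
  (∀ i v, 0 ≤ ξ i v) ∧
  (∀ (i : Fin k) (v : Fin k → ℝ) (s : ℝ), ξ i (Function.update v i s) = ξ i v)

/-- Envelope utility `u'_i(v) = Σ_{s ∈ V_i, s ≤ v_i} x_i(s, v_{-i}) (s - pred s)`. -/
noncomputable def envU (S : Setting k) (x : Alloc k) (i : Fin k) (v : Fin k → ℝ) : ℝ :=
  ∑ s ∈ (S.V i).filter (fun s => s ≤ v i), x (Function.update v i s) i * (s - predV S i s)

/-- `ū'_i(v_{-i}) = E_{v_i}[u'_i(v)]`. -/
noncomputable def envUbar (S : Setting k) (x : Alloc k) (i : Fin k) (v : Fin k → ℝ) : ℝ :=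
  ∑ s ∈ S.V i, S.f i s * envU S x i (Function.update v i s)

/-- Balance increment `Δb_i(v) = u'_i(v) - ū'_i(v_{-i}) + ξ_i(v_{-i})`. -/
noncomputable def deltaB (S : Setting k) (x : Alloc k) (ξ : Util k)
    (v : Fin k → ℝ) (i : Fin k) : ℝ :=
  envU S x i v - envUbar S x i v + ξ i v

/-- The objective of the single-period program `P(g, b, ξ)` at allocation `x`. -/
noncomputable def obj (S : Setting k) (g : (Fin k → ℝ) → ℝ) (b : Fin k → ℝ)
    (ξ : Util k) (x : Alloc k) : ℝ :=
  ∑ v ∈ profiles S, prob S v *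
    ((∑ i, (v i * x v i - ξ i v)) + g (fun i => deltaB S x ξ v i + b i))

/-- Feasibility for the single-period program `P(g, b, ξ)`: allocation bounds,
feasibility, monotonicity, and the balance constraint. -/
def Feasible (S : Setting k) (b : Fin k → ℝ) (ξ : Util k) (x : Alloc k) : Prop :=
  (∀ v ∈ profiles S, ∀ i, 0 ≤ x v i ∧ x v i ≤ 1) ∧
  (∀ v ∈ profiles S, ∑ i, x v i ≤ 1) ∧
  (∀ (i : Fin k), ∀ v ∈ profiles S, ∀ s ∈ S.V i, ∀ s' ∈ S.V i, s ≤ s' →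
    x (Function.update v i s) i ≤ x (Function.update v i s') i) ∧
  (∀ (i : Fin k), ∀ v ∈ profiles S, envUbar S x i v ≤ b i + ξ i v)

/-- `G(g, b, ξ)`: the optimal value (supremum) of the program `P(g, b, ξ)`. -/
noncomputable def G (S : Setting k) (g : (Fin k → ℝ) → ℝ) (b : Fin k → ℝ)
    (ξ : Util k) : ℝ :=
  sSup {r : ℝ | ∃ x : Alloc k, Feasible S b ξ x ∧ r = obj S g b ξ x}

/-! The program `P(g, b, ξ)` is jointly concave in `(ξ, x)`: every constraint is linear in the
pair, `Δb` is linear in it, and the objective is linear plus `g ∘ (Δb + b)`. Hence mixing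
near-optimal allocations for `ξ` and `ξ'` gives a feasible allocation for the mixed `ξ` whose
value is at least the mixture of the two values. The optimal values are finite because feasible
allocations take values in `[0, 1]`, which confines `Δb + b` to a compact box on which `g` is
bounded. -/

theorem bddAbove_image_finset_sum_mul {ι α : Type*} (s : Finset ι) (X : Set α) {w : ι → ℝ}
    (hw : ∀ i ∈ s, 0 ≤ w i) {F : ι → α → ℝ} (hF : ∀ i ∈ s, BddAbove (F i '' X)) :
    BddAbove ((fun x => ∑ i ∈ s, w i * F i x) '' X) := by
  choose! c hc using hF
  refine ⟨∑ i ∈ s, w i * c i, ?_⟩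
  rintro _ ⟨x, hx, rfl⟩
  exact sum_le_sum fun i hi => mul_le_mul_of_nonneg_left (hc i hi ⟨x, hx, rfl⟩) (hw i hi)

theorem mul_csSup_add_mul_csSup_le {A A' : Set ℝ} (hA : A.Nonempty) (hA' : A'.Nonempty)
    {θ M : ℝ} (hθ0 : 0 ≤ θ) (hθ1 : θ ≤ 1)
    (h : ∀ r ∈ A, ∀ r' ∈ A', θ * r + (1 - θ) * r' ≤ M) :
    θ * sSup A + (1 - θ) * sSup A' ≤ M := by
  refine le_of_forall_pos_le_add fun ε hε => ?_
  obtain ⟨r, hr, hr_gt⟩ := exists_lt_of_lt_csSup hA (sub_lt_self (sSup A) hε)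
  obtain ⟨r', hr', hr'_gt⟩ := exists_lt_of_lt_csSup hA' (sub_lt_self (sSup A') hε)
  have := mul_le_mul_of_nonneg_left hr_gt.le hθ0
  have := mul_le_mul_of_nonneg_left hr'_gt.le (sub_nonneg.2 hθ1)
  linarith [h r hr r' hr']

variable (S : Setting k)

theorem update_mem_profiles {v : Fin k → ℝ} (hv : v ∈ profiles S) {i : Fin k} {s : ℝ}
    (hs : s ∈ S.V i) : Function.update v i s ∈ profiles S := by
  simp only [profiles, Fintype.mem_piFinset] at hv ⊢
  intro j
  rcases eq_or_ne j i with rfl | hj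
  · simpa using hs
  · simpa [Function.update_of_ne hj] using hv j

theorem prob_nonneg {v : Fin k → ℝ} (hv : v ∈ profiles S) : 0 ≤ prob S v :=
  prod_nonneg fun i _ => (S.f_pos i _ (Fintype.mem_piFinset.1 hv i)).le

section Linearity

variable (a c : ℝ) (x x' : Alloc k) (i : Fin k) (v : Fin k → ℝ)

theorem envU_linear_comb :
    envU S (a • x + c • x') i v = a * envU S x i v + c * envU S x' i v := by
  simp only [envU, Pi.add_apply, Pi.smul_apply, smul_eq_mul, mul_sum, ← sum_add_distrib]
  exact sum_congr rfl fun _ _ => by ring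

theorem envUbar_linear_comb :
    envUbar S (a • x + c • x') i v = a * envUbar S x i v + c * envUbar S x' i v := by
  simp only [envUbar, envU_linear_comb, mul_sum, ← sum_add_distrib]
  exact sum_congr rfl fun _ _ => by ring

theorem deltaB_linear_comb (ξ ξ' : Util k) :
    deltaB S (a • x + c • x') (a • ξ + c • ξ') v i
      = a * deltaB S x ξ v i + c * deltaB S x' ξ' v i := by
  simp only [deltaB, envU_linear_comb, envUbar_linear_comb, Pi.add_apply, Pi.smul_apply,
    smul_eq_mul]
  ring

end Linearity

theorem Feasible.convex_comb {b : Fin k → ℝ} {ξ ξ' : Util k} {x x' : Alloc k}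
    (hx : Feasible S b ξ x) (hx' : Feasible S b ξ' x') {θ : ℝ} (hθ0 : 0 ≤ θ) (hθ1 : θ ≤ 1) :
    Feasible S b (θ • ξ + (1 - θ) • ξ') (θ • x + (1 - θ) • x') := by
  obtain ⟨hbound, hsum, hmono, hbal⟩ := hx
  obtain ⟨hbound', hsum', hmono', hbal'⟩ := hx'
  have h1θ : 0 ≤ 1 - θ := sub_nonneg.2 hθ1
  have mix_le {r s r' s' : ℝ} (h : r ≤ s) (h' : r' ≤ s') :
      θ * r + (1 - θ) * r' ≤ θ * s + (1 - θ) * s' :=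
    add_le_add (mul_le_mul_of_nonneg_left h hθ0) (mul_le_mul_of_nonneg_left h' h1θ)
  refine ⟨fun v hv i => ?_, fun v hv => ?_, fun i v hv s hs s' hs' hss => ?_, fun i v hv => ?_⟩
  · exact convex_Icc (0 : ℝ) 1 (hbound v hv i) (hbound' v hv i) hθ0 h1θ (by ring)
  · calc ∑ i, (θ • x + (1 - θ) • x') v i = θ * ∑ i, x v i + (1 - θ) * ∑ i, x' v i := by
          simp only [Pi.add_apply, Pi.smul_apply, smul_eq_mul, mul_sum, sum_add_distrib]
      _ ≤ θ * 1 + (1 - θ) * 1 := mix_le (hsum v hv) (hsum' v hv)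
      _ = 1 := by ring
  · exact mix_le (hmono i v hv s hs s' hs' hss) (hmono' i v hv s hs s' hs' hss)
  · have hmix : θ * (b i + ξ i v) + (1 - θ) * (b i + ξ' i v)
        = b i + (θ • ξ + (1 - θ) • ξ') i v := by
      simp only [Pi.add_apply, Pi.smul_apply, smul_eq_mul]
      ring
    rw [envUbar_linear_comb]
    exact (mix_le (hbal i v hv) (hbal' i v hv)).trans_eq hmix

theorem feasible_zero {b : Fin k → ℝ} {ξ : Util k} (hb : ∀ i, 0 ≤ b i)
    (hξ : ∀ i v, 0 ≤ ξ i v) : Feasible S b ξ 0 := by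
  refine ⟨fun _ _ _ => ⟨le_rfl, zero_le_one⟩, fun _ _ => by simp, fun _ _ _ _ _ _ _ _ => le_rfl,
    fun i v _ => ?_⟩
  simpa [envUbar, envU] using add_nonneg (hb i) (hξ i v)

noncomputable def objAt (g : (Fin k → ℝ) → ℝ) (b : Fin k → ℝ) (ξ : Util k) (x : Alloc k)
    (v : Fin k → ℝ) : ℝ :=
  (∑ i, (v i * x v i - ξ i v)) + g (fun i => deltaB S x ξ v i + b i)

theorem obj_eq_sum_objAt (g : (Fin k → ℝ) → ℝ) (b : Fin k → ℝ) (ξ : Util k) (x : Alloc k) :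
    obj S g b ξ x = ∑ v ∈ profiles S, prob S v * objAt S g b ξ x v := rfl

section Concavity

variable {g : (Fin k → ℝ) → ℝ} (hg : ConcaveOn ℝ Set.univ g) (b : Fin k → ℝ) (ξ ξ' : Util k)
  (x x' : Alloc k) {θ : ℝ} (hθ0 : 0 ≤ θ) (hθ1 : θ ≤ 1)
include hg hθ0 hθ1

theorem objAt_convex_comb_ge (v : Fin k → ℝ) :
    θ * objAt S g b ξ x v + (1 - θ) * objAt S g b ξ' x' v
      ≤ objAt S g b (θ • ξ + (1 - θ) • ξ') (θ • x + (1 - θ) • x') v := by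
  have hlin : ∑ i, (v i * (θ • x + (1 - θ) • x') v i - (θ • ξ + (1 - θ) • ξ') i v)
      = θ * ∑ i, (v i * x v i - ξ i v) + (1 - θ) * ∑ i, (v i * x' v i - ξ' i v) := by
    simp only [Pi.add_apply, Pi.smul_apply, smul_eq_mul, mul_sum, ← sum_add_distrib]
    exact sum_congr rfl fun _ _ => by ring
  have hbal : (fun i => deltaB S (θ • x + (1 - θ) • x') (θ • ξ + (1 - θ) • ξ') v i + b i)
      = θ • (fun i => deltaB S x ξ v i + b i) + (1 - θ) • (fun i => deltaB S x' ξ' v i + b i) := by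
    funext i
    simp only [deltaB_linear_comb, Pi.add_apply, Pi.smul_apply, smul_eq_mul]
    ring
  have hgc := hg.2 (Set.mem_univ (fun i => deltaB S x ξ v i + b i))
    (Set.mem_univ (fun i => deltaB S x' ξ' v i + b i)) hθ0 (sub_nonneg.2 hθ1) (by ring)
  simp only [smul_eq_mul] at hgc
  rw [objAt, objAt, objAt, hlin, hbal]
  linarith

theorem obj_convex_comb_ge :
    θ * obj S g b ξ x + (1 - θ) * obj S g b ξ' x'
      ≤ obj S g b (θ • ξ + (1 - θ) • ξ') (θ • x + (1 - θ) • x') := by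
  simp only [obj_eq_sum_objAt, mul_sum, ← sum_add_distrib]
  refine sum_le_sum fun v hv => ?_
  calc θ * (prob S v * objAt S g b ξ x v) + (1 - θ) * (prob S v * objAt S g b ξ' x' v)
      = prob S v * (θ * objAt S g b ξ x v + (1 - θ) * objAt S g b ξ' x' v) := by ring
    _ ≤ _ := mul_le_mul_of_nonneg_left (objAt_convex_comb_ge S hg b ξ ξ' x x' hθ0 hθ1 v)
        (prob_nonneg S hv)

end Concavity

section Boundedness

variable {x : Alloc k} (hx : ∀ v ∈ profiles S, ∀ i, 0 ≤ x v i ∧ x v i ≤ 1) (i : Fin k)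
  {v : Fin k → ℝ} (hv : v ∈ profiles S)
include hx hv

theorem abs_envU_le : |envU S x i v| ≤ ∑ s ∈ S.V i, |s - predV S i s| := by
  calc |envU S x i v|
      ≤ ∑ s ∈ (S.V i).filter (· ≤ v i), |x (Function.update v i s) i * (s - predV S i s)| :=
        abs_sum_le_sum_abs _ _
    _ ≤ ∑ s ∈ (S.V i).filter (· ≤ v i), |s - predV S i s| := by
        refine sum_le_sum fun s hs => ?_
        obtain ⟨h0, h1⟩ := hx _ (update_mem_profiles S hv (mem_filter.1 hs).1) i
        rw [abs_mul]
        exact mul_le_of_le_one_left (abs_nonneg _) ((abs_of_nonneg h0).trans_le h1)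
    _ ≤ ∑ s ∈ S.V i, |s - predV S i s| :=
        sum_le_sum_of_subset_of_nonneg (filter_subset _ _) fun _ _ _ => abs_nonneg _

theorem abs_envUbar_le : |envUbar S x i v| ≤ ∑ s ∈ S.V i, |s - predV S i s| := by
  calc |envUbar S x i v|
      ≤ ∑ s ∈ S.V i, S.f i s * ∑ s ∈ S.V i, |s - predV S i s| := by
        refine (abs_sum_le_sum_abs _ _).trans (sum_le_sum fun s hs => ?_)
        rw [abs_mul, abs_of_pos (S.f_pos i s hs)]
        exact mul_le_mul_of_nonneg_left (abs_envU_le S hx i (update_mem_profiles S hv hs))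
          (S.f_pos i s hs).le
    _ = ∑ s ∈ S.V i, |s - predV S i s| := by rw [← sum_mul, S.f_sum, one_mul]

end Boundedness

theorem bddAbove_objAt {g : (Fin k → ℝ) → ℝ} (hg : Continuous g) (b : Fin k → ℝ) (ξ : Util k)
    {v : Fin k → ℝ} (hv : v ∈ profiles S) :
    BddAbove ((objAt S g b ξ · v) '' {x | Feasible S b ξ x}) := by
  set W : Fin k → ℝ := fun i => 2 * ∑ s ∈ S.V i, |s - predV S i s|
  set c : Fin k → ℝ := fun i => ξ i v + b i
  obtain ⟨M, hM⟩ := (isCompact_Icc (a := c - W) (b := c + W)).bddAbove_image hg.continuousOn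
  refine ⟨∑ i, (v i - ξ i v) + M, ?_⟩
  rintro _ ⟨x, hx, rfl⟩
  refine add_le_add (sum_le_sum fun i _ => ?_) (hM ⟨_, ?_, rfl⟩)
  · have hvi := S.V_nonneg i _ (Fintype.mem_piFinset.1 hv i)
    have := mul_le_of_le_one_right hvi (hx.1 v hv i).2
    linarith
  · have hΔ (i : Fin k) : |envU S x i v - envUbar S x i v| ≤ W i :=
      (abs_sub _ _).trans (by linarith [abs_envU_le S hx.1 i hv, abs_envUbar_le S hx.1 i hv])
    constructor <;> intro i <;> have := abs_le.1 (hΔ i) <;>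
      simp only [Pi.add_apply, Pi.sub_apply, c, deltaB] <;> linarith

theorem bddAbove_obj {g : (Fin k → ℝ) → ℝ} (hg : Continuous g) (b : Fin k → ℝ) (ξ : Util k) :
    BddAbove (obj S g b ξ '' {x | Feasible S b ξ x}) := by
  exact bddAbove_image_finset_sum_mul _ _ (fun v hv => prob_nonneg S hv)
    fun v hv => bddAbove_objAt S hg b ξ hv

theorem G_eq_sSup_image (g : (Fin k → ℝ) → ℝ) (b : Fin k → ℝ) (ξ : Util k) :
    G S g b ξ = sSup (obj S g b ξ '' {x | Feasible S b ξ x}) := by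
  rw [G]
  congr 1
  ext
  simp [eq_comm]

theorem G_concave_in_xi_general
    (k : ℕ) (S : Setting k)
    (g : (Fin k → ℝ) → ℝ) (hg : ConcaveOn ℝ Set.univ g)
    (b : Fin k → ℝ) (hb : ∀ i, 0 ≤ b i)
    (ξ ξ' : Util k) (hξ : ValidXi S ξ) (hξ' : ValidXi S ξ')
    (θ : ℝ) (hθ0 : 0 ≤ θ) (hθ1 : θ ≤ 1) :
    θ * G S g b ξ + (1 - θ) * G S g b ξ'
      ≤ G S g b (fun i v => θ * ξ i v + (1 - θ) * ξ' i v) := by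
  have hgc : Continuous g := continuousOn_univ.1 (hg.continuousOn isOpen_univ)
  change _ ≤ G S g b (θ • ξ + (1 - θ) • ξ')
  simp only [G_eq_sSup_image]
  refine mul_csSup_add_mul_csSup_le ?_ ?_ hθ0 hθ1 ?_
  · exact ⟨_, 0, feasible_zero S hb hξ.1, rfl⟩
  · exact ⟨_, 0, feasible_zero S hb hξ'.1, rfl⟩
  rintro _ ⟨x, hx, rfl⟩ _ ⟨x', hx', rfl⟩
  exact (obj_convex_comb_ge S hg b ξ ξ' x x' hθ0 hθ1).trans
    (le_csSup (bddAbove_obj S hgc b _) ⟨_, hx.convex_comb S hx' hθ0 hθ1, rfl⟩)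

/-- For every concave `g : ℝ^k → ℝ` and fixed `b ∈ (ℝ≥0)^k`, the map
`ξ ↦ G(g, b, ξ)` is concave on the convex set of valid families `ξ`. -/
theorem G_concave_in_xi
    (k : ℕ) (hk : 1 ≤ k) (S : Setting k)
    (g : (Fin k → ℝ) → ℝ) (hg : ConcaveOn ℝ Set.univ g)
    (b : Fin k → ℝ) (hb : ∀ i, 0 ≤ b i)
    (ξ ξ' : Util k) (hξ : ValidXi S ξ) (hξ' : ValidXi S ξ')
    (θ : ℝ) (hθ0 : 0 ≤ θ) (hθ1 : θ ≤ 1) :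
    θ * G S g b ξ + (1 - θ) * G S g b ξ'
      ≤ G S g b (fun i v => θ * ξ i v + (1 - θ) * ξ' i v) :=
  G_concave_in_xi_general k S g hg b hb ξ ξ' hξ hξ' θ hθ0 hθ1

end SinglePeriod
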